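/- arXiv:2202.01009 — 3 statements merged into one kernel-verified Lean document; each statement's English description precedes it below -/
import Mathlib

section
/- Let f : ℝᵈ → ℝ be C¹ with L-Lipschitz gradient. If ∫ e^{f(x)} dx < ∞, then f is bounded above on ℝᵈ. -/
/-!
A Lipschitz gradient gives the second-order bound `|f (x + u) - f x - ⟪∇f x, u⟫| ≤ L ‖u‖²`.
Since the linear term changes sign with `u`, one of `f (x + u)`, `f (x - u)` is at least
`f x - L ‖u‖²`, so `e^{f (x + u)} + e^{f (x - u)} ≥ e^{f x - L}` on the unit ball. Integrating
over `u` and using the translation and reflection invariance of Lebesgue measure yields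
`e^{f x - L} vol(B₁) ≤ 2 ∫ e^f`, a bound independent of `x`.
-/

open MeasureTheory Real Metric
open scoped ENNReal

theorem norm_image_add_sub_sub_fderiv_le {E F : Type*} [NormedAddCommGroup E] [NormedSpace ℝ E]
    [NormedAddCommGroup F] [NormedSpace ℝ F] {f : E → F} {f' : E → E →L[ℝ] F} {L : NNReal}
    (hf : ∀ x, HasFDerivAt f (f' x) x) (hlip : LipschitzWith L f') (x u : E) :
    ‖f (x + u) - f x - f' x u‖ ≤ L * ‖u‖ ^ 2 := by
  have bound : ∀ y ∈ closedBall x ‖u‖, ‖f' y - f' x‖ ≤ L * ‖u‖ := fun y hy =>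
    (hlip.norm_sub_le y x).trans (by gcongr; exact mem_closedBall_iff_norm.1 hy)
  have := (convex_closedBall x ‖u‖).norm_image_sub_le_of_norm_hasFDerivWithin_le' (y := x + u)
    (fun y _ => (hf y).hasFDerivWithinAt) bound (mem_closedBall_self (norm_nonneg u))
    (by simp)
  simpa [sq, mul_assoc] using this

theorem image_sub_le_max_image_add_image_sub {E : Type*} [NormedAddCommGroup E] [NormedSpace ℝ E]
    {f : E → ℝ} {f' : E → E →L[ℝ] ℝ} {L : NNReal}
    (hf : ∀ x, HasFDerivAt f (f' x) x) (hlip : LipschitzWith L f') (x u : E) :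
    f x - L * ‖u‖ ^ 2 ≤ max (f (x + u)) (f (x - u)) := by
  have hplus := abs_le.1 (norm_image_add_sub_sub_fderiv_le hf hlip x u)
  have hminus := abs_le.1 (norm_image_add_sub_sub_fderiv_le hf hlip x (-u))
  rw [← sub_eq_add_neg, map_neg, norm_neg] at hminus
  rcases le_total 0 (f' x u) with h | h
  · exact le_max_of_le_left (by linarith [hplus.1])
  · exact le_max_of_le_right (by linarith [hminus.1])

theorem ofReal_exp_sub_le_add_of_norm_le_one {E : Type*} [NormedAddCommGroup E]
    [NormedSpace ℝ E] {f : E → ℝ} {f' : E → E →L[ℝ] ℝ} {L : NNReal}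
    (hf : ∀ x, HasFDerivAt f (f' x) x) (hlip : LipschitzWith L f') (x : E) {u : E}
    (hu : ‖u‖ ≤ 1) :
    ENNReal.ofReal (Real.exp (f x - L)) ≤
      ENNReal.ofReal (Real.exp (f (x + u))) + ENNReal.ofReal (Real.exp (f (x - u))) := by
  have hu_sq : ‖u‖ ^ 2 ≤ 1 := pow_le_one₀ (norm_nonneg u) hu
  have hL : f x - L ≤ f x - L * ‖u‖ ^ 2 := by nlinarith [L.coe_nonneg]
  rcases le_max_iff.1 (hL.trans (image_sub_le_max_image_add_image_sub hf hlip x u)) with h | h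
  · exact le_add_right (by gcongr)
  · exact le_add_left (by gcongr)

theorem mul_measure_le_two_mul_lintegral {G : Type*} [AddGroup G] [MeasurableSpace G]
    [MeasurableAdd G] [MeasurableNeg G] (μ : Measure G) [μ.IsAddLeftInvariant] [μ.IsNegInvariant]
    {g : G → ℝ≥0∞} (hg : Measurable g) {s : Set G} {c : ℝ≥0∞} (x : G)
    (hc : ∀ u ∈ s, c ≤ g (x + u) + g (x - u)) :
    c * μ s ≤ 2 * ∫⁻ y, g y ∂μ := by
  have hg_add : Measurable fun u => g (x + u) := hg.comp (measurable_const_add x)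
  have hg_sub : Measurable fun u => g (x - u) := hg.comp (measurable_const_sub x)
  calc c * μ s = ∫⁻ _ in s, c ∂μ := (setLIntegral_const s c).symm
    _ ≤ ∫⁻ u in s, g (x + u) + g (x - u) ∂μ := setLIntegral_mono (hg_add.add hg_sub) hc
    _ ≤ ∫⁻ u, g (x + u) + g (x - u) ∂μ := setLIntegral_le_lintegral s _
    _ = 2 * ∫⁻ y, g y ∂μ := by
      rw [lintegral_add_left hg_add, lintegral_add_left_eq_self,
        lintegral_sub_left_eq_self, two_mul]

/-- A `C¹` function on `ℝᵈ` with `L`-Lipschitz gradient such that `∫ e^f < ∞` is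
bounded above. -/
theorem stmt_9 {d : ℕ} (f : EuclideanSpace ℝ (Fin d) → ℝ)
    (f' : EuclideanSpace ℝ (Fin d) → EuclideanSpace ℝ (Fin d))
    (L : NNReal)
    (hgrad : ∀ x, HasGradientAt f (f' x) x)
    (hlip : LipschitzWith L f')
    (hint : Integrable (fun x => Real.exp (f x)) volume) :
    ∃ M : ℝ, ∀ x, f x ≤ M := by
  have hf : ∀ x, HasFDerivAt f (InnerProductSpace.toDual ℝ _ (f' x)) x :=
    fun x => (hgrad x).hasFDerivAt
  have hlip_dual : LipschitzWith L (fun x => InnerProductSpace.toDual ℝ _ (f' x)) :=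
    ((InnerProductSpace.toDual ℝ _).lipschitz.comp hlip).weaken (one_mul L).le
  have hmeas : Measurable fun x => ENNReal.ofReal (Real.exp (f x)) := by
    have : Continuous f := continuous_iff_continuousAt.2 fun x => (hf x).continuousAt
    fun_prop
  set C := ∫⁻ x, ENNReal.ofReal (Real.exp (f x))
  set v := volume (ball (0 : EuclideanSpace ℝ (Fin d)) 1)
  have hC : C ≠ ⊤ := hint.lintegral_lt_top.ne
  have hv : v ≠ 0 := (measure_ball_pos volume _ one_pos).ne'
  refine ⟨L + Real.log (2 * C / v).toReal, fun x => ?_⟩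
  have key : ENNReal.ofReal (Real.exp (f x - L)) * v ≤ 2 * C :=
    mul_measure_le_two_mul_lintegral volume hmeas x fun _ hu =>
      ofReal_exp_sub_le_add_of_norm_le_one hf hlip_dual x (mem_ball_zero_iff.1 hu).le
  have hexp : Real.exp (f x - L) ≤ (2 * C / v).toReal := by
    have hfin : 2 * C / v ≠ ⊤ := by simp [ENNReal.div_eq_top, ENNReal.mul_eq_top, hv, hC]
    rw [← ENNReal.ofReal_le_iff_le_toReal hfin]
    exact ENNReal.le_div_iff_mul_le (Or.inl hv) (Or.inl measure_ball_lt_top.ne) |>.2 key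
  have := (Real.le_log_iff_exp_le ((Real.exp_pos _).trans_le hexp)).2 hexp
  linarith
end

section
/- Suppose G : P₂(ℝᵈ) → ℝ satisfies G(μ) ≥ 2C₁M₂(μ) - C₂ for all μ, with C₁ > 0. Then for every 0 < τ ≤ τ₀ and every μ ∈ P₂ᵃ(ℝᵈ), F_τ(μ) := G(μ) + τH(μ) ≥ C₁ M₂(μ) - C₂', where C₂' depends only on C₁, C₂, τ₀, d. Consequently there exist constants A, B > 0 (depending only on C₁, C₂, τ₀, d) such that -H(μ) ≤ A·F_τ(μ) + B for all such μ and τ. -/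
/-!
Gibbs' inequality against the Gaussian reference measure with density proportional to
`exp (-a ‖x‖²)` gives `-H(μ) ≤ a M₂(μ) + (d/2) log (π/a)` for every `a > 0`. Taking
`a = C₁/τ₀` and multiplying by `τ ≤ τ₀` lets half of the confinement `2 C₁ M₂` in `G` absorb
`-τ H`; taking `a = C₁` then bounds `-H` by `C₁ M₂ + const ≤ F_τ + const`.
-/

open MeasureTheory Real Set

noncomputable section

def IsP2 {d : ℕ} (μ : Measure (EuclideanSpace ℝ (Fin d))) : Prop :=
  IsProbabilityMeasure μ ∧ Integrable (fun x => ‖x‖ ^ 2) μ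

def ent {d : ℕ} (μ : Measure (EuclideanSpace ℝ (Fin d))) : ℝ :=
  ∫ x, Real.log ((μ.rnDeriv volume x).toReal) ∂μ

def M2 {d : ℕ} (μ : Measure (EuclideanSpace ℝ (Fin d))) : ℝ :=
  ∫ x, ‖x‖ ^ 2 ∂μ

lemma integral_sub_log_integral_exp_le_integral_llr {α : Type*} [MeasurableSpace α]
    {μ ν : Measure α} [IsProbabilityMeasure μ] [SigmaFinite ν] (hμν : μ ≪ ν)
    {f : α → ℝ} (hfμ : Integrable f μ) (hfν : Integrable (fun x ↦ exp (f x)) ν)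
    (h_int : Integrable (llr μ ν) μ) :
    ∫ x, f x ∂μ - log (∫ x, exp (f x) ∂ν) ≤ ∫ x, llr μ ν x ∂μ := by
  have : NeZero ν := ⟨fun h ↦ IsProbabilityMeasure.ne_zero μ (by simpa [h] using hμν)⟩
  have : IsProbabilityMeasure (ν.tilted f) := isProbabilityMeasure_tilted hfν
  -- Gibbs' inequality `KL(μ ‖ ν.tilted f) ≥ 0`
  have hgibbs := InformationTheory.integral_llr_add_sub_measure_univ_nonneg
    (hμν.trans (absolutelyContinuous_tilted hfν))
    (integrable_llr_tilted_right hμν hfμ h_int hfν)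
  rw [integral_llr_tilted_right hμν hfμ hfν h_int] at hgibbs
  simp only [probReal_univ] at hgibbs
  linarith

section InnerProductSpace

variable {V : Type*} [NormedAddCommGroup V] [InnerProductSpace ℝ V] [FiniteDimensional ℝ V]
  [MeasurableSpace V] [BorelSpace V]

lemma integrable_exp_neg_mul_sq_norm {a : ℝ} (ha : 0 < a) :
    Integrable fun x : V ↦ exp (-a * ‖x‖ ^ 2) :=
  .of_integral_ne_zero <| by rw [GaussianFourier.integral_rexp_neg_mul_sq_norm ha]; positivity

lemma neg_integral_llr_volume_le {μ : Measure V} [IsProbabilityMeasure μ] (hμ : μ ≪ volume)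
    (hM : Integrable (fun x ↦ ‖x‖ ^ 2) μ) (h_int : Integrable (llr μ volume) μ)
    {a : ℝ} (ha : 0 < a) :
    -∫ x, llr μ volume x ∂μ ≤
      a * ∫ x, ‖x‖ ^ 2 ∂μ + Module.finrank ℝ V / 2 * log (π / a) := by
  have h := integral_sub_log_integral_exp_le_integral_llr hμ (hM.const_mul (-a))
    (integrable_exp_neg_mul_sq_norm ha) h_int
  rw [integral_const_mul, GaussianFourier.integral_rexp_neg_mul_sq_norm ha,
    log_rpow (by positivity)] at h
  linarith

end InnerProductSpace

lemma neg_ent_le {d : ℕ} {μ : Measure (EuclideanSpace ℝ (Fin d))} (hμ : IsP2 μ)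
    (hac : μ ≪ volume) (h_int : Integrable (fun x ↦ log (μ.rnDeriv volume x).toReal) μ)
    {a : ℝ} (ha : 0 < a) :
    -ent μ ≤ a * M2 μ + d / 2 * log (π / a) := by
  have := hμ.1
  simpa [ent, M2, llr] using neg_integral_llr_volume_le hac hμ.2 h_int ha

lemma neg_mul_ent_le {d : ℕ} {μ : Measure (EuclideanSpace ℝ (Fin d))} (hμ : IsP2 μ)
    (hac : μ ≪ volume) (h_int : Integrable (fun x ↦ log (μ.rnDeriv volume x).toReal) μ)
    {C₁ τ τ₀ : ℝ} (hC₁ : 0 < C₁) (hτ : 0 < τ) (hττ₀ : τ ≤ τ₀) :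
    -(τ * ent μ) ≤ C₁ * M2 μ + τ₀ * max (d / 2 * log (π / (C₁ / τ₀))) 0 := by
  have hτ₀ : 0 < τ₀ := hτ.trans_le hττ₀
  have hM2 : 0 ≤ M2 μ := integral_nonneg fun _ ↦ by positivity
  set L := (d : ℝ) / 2 * log (π / (C₁ / τ₀))
  calc -(τ * ent μ) = τ * -ent μ := by ring
    _ ≤ τ * (C₁ / τ₀ * M2 μ + L) :=
        mul_le_mul_of_nonneg_left (neg_ent_le hμ hac h_int (div_pos hC₁ hτ₀)) hτ.le
    _ = τ / τ₀ * (C₁ * M2 μ) + τ * L := by ring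
    _ ≤ 1 * (C₁ * M2 μ) + τ₀ * max L 0 := by
        refine add_le_add (by gcongr; exact (div_le_one hτ₀).mpr hττ₀) ?_
        exact (mul_le_mul_of_nonneg_left (le_max_left L 0) hτ.le).trans
          (mul_le_mul_of_nonneg_right hττ₀ (le_max_right L 0))
    _ = C₁ * M2 μ + τ₀ * max L 0 := by rw [one_mul]

theorem stmt_11_general {d : ℕ} (C₁ C₂ τ₀ : ℝ) (hC₁ : 0 < C₁)
    (G : Measure (EuclideanSpace ℝ (Fin d)) → ℝ)
    (hGlb : ∀ μ, IsP2 μ → μ ≪ volume → G μ ≥ 2 * C₁ * M2 μ - C₂) :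
    ∃ C₂' A B : ℝ, 0 < A ∧ 0 < B ∧
      ∀ τ : ℝ, 0 < τ → τ ≤ τ₀ →
        ∀ μ : Measure (EuclideanSpace ℝ (Fin d)), IsP2 μ → μ ≪ volume →
          Integrable (fun x => Real.log ((μ.rnDeriv volume x).toReal)) μ →
          G μ + τ * ent μ ≥ C₁ * M2 μ - C₂' ∧
          -ent μ ≤ A * (G μ + τ * ent μ) + B := by
  set C₂' := C₂ + τ₀ * max (d / 2 * log (π / (C₁ / τ₀))) 0 with hC₂'
  set K := C₂' + d / 2 * log (π / C₁) with hK
  refine ⟨C₂', 1, max K 0 + 1, one_pos, by positivity, ?_⟩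
  intro τ hτ hττ₀ μ hμ hac h_int
  have hG := hGlb μ hμ hac
  have h_τent := neg_mul_ent_le hμ hac h_int hC₁ hτ hττ₀
  have h_ent := neg_ent_le hμ hac h_int hC₁
  have hF : G μ + τ * ent μ ≥ C₁ * M2 μ - C₂' := by linarith
  exact ⟨hF, by linarith [le_max_left K 0]⟩

/-- If `G(μ) ≥ 2C₁M₂(μ) - C₂`, then uniformly over `0 < τ ≤ τ₀`,
`F_τ(μ) ≥ C₁ M₂(μ) - C₂'` and `-H(μ) ≤ A F_τ(μ) + B` for constants depending only on
`C₁, C₂, τ₀, d`. -/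
theorem stmt_11 {d : ℕ} (C₁ C₂ τ₀ : ℝ) (hC₁ : 0 < C₁) (hτ₀ : 0 < τ₀)
    (G : Measure (EuclideanSpace ℝ (Fin d)) → ℝ)
    (hGlb : ∀ μ, IsP2 μ → μ ≪ volume → G μ ≥ 2 * C₁ * M2 μ - C₂) :
    ∃ C₂' A B : ℝ, 0 < A ∧ 0 < B ∧
      ∀ τ : ℝ, 0 < τ → τ ≤ τ₀ →
        ∀ μ : Measure (EuclideanSpace ℝ (Fin d)), IsP2 μ → μ ≪ volume →
          Integrable (fun x => Real.log ((μ.rnDeriv volume x).toReal)) μ →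
          G μ + τ * ent μ ≥ C₁ * M2 μ - C₂' ∧
          -ent μ ≤ A * (G μ + τ * ent μ) + B :=
  stmt_11_general C₁ C₂ τ₀ hC₁ G hGlb
end
end

section
/- Let G : P₂(ℝᵈ) → ℝ admit at every μ a first-variation V[μ] which is continuous in (μ, x) (with μ in the W₂ topology on line segments). Then for μ₀, μ₁ ∈ P₂(ℝᵈ) and μ_t = (1-t)μ₀ + tμ₁, one has G(μ₁) - G(μ₀) = ∫₀¹ ∫ V[μ_t] d(μ₁ - μ₀) dt. -/
/-!
A first-variation step from `μ_t` towards `μ₁` (resp. `μ₀`) stays on the segment, so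
`h t = G μ_t` has a right and a left derivative at every interior point. Since `V[μ_t]` need not be
integrable against `μ₀` and `μ₁`, the integrals in these derivatives may be junk and neither
one-sided derivative need equal `∫ V[μ_t] d(μ₁ - μ₀)`; but wherever they agree, adding their two
defining equations shows that the common value is that integral. By Young's theorem the one-sided
derivatives of a real function agree off a countable set, so the right derivative equals the
continuous integrand almost everywhere, and the fundamental theorem of calculus for right
derivatives applies.
-/

open MeasureTheory Real Filter Set

noncomputable section

open Topology

lemma countable_setOf_strictLocalMin (k : ℝ → ℝ) :
    {t : ℝ | ∀ᶠ s in 𝓝[≠] t, k t < k s}.Countable := by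
  have hsub : {t : ℝ | ∀ᶠ s in 𝓝[≠] t, k t < k s} ⊆
      ⋃ (p : ℚ) (q : ℚ), {t : ℝ | t ∈ Ioo (p : ℝ) q ∧ ∀ s ∈ Ioo (p : ℝ) q, s ≠ t → k t < k s} := by
    intro t ht
    obtain ⟨ε, hε, hball⟩ := Metric.eventually_nhds_iff.1 (eventually_nhdsWithin_iff.1 ht)
    obtain ⟨p, hpε, hp⟩ := exists_rat_btwn (sub_lt_self t hε)
    obtain ⟨q, hq, hqε⟩ := exists_rat_btwn (lt_add_of_pos_right t hε)
    refine mem_iUnion₂.2 ⟨p, q, ⟨hp, hq⟩, fun s hs hst => hball ?_ hst⟩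
    rw [Real.dist_eq, abs_lt]
    constructor <;> linarith [hs.1, hs.2]
  refine .mono hsub (countable_iUnion fun p => countable_iUnion fun q => ?_)
  refine Subsingleton.countable fun a ha b hb => by_contra fun hab => ?_
  exact (ha.2 b hb.1 (Ne.symm hab)).asymm (hb.2 a ha.1 hab)

lemma eventually_lt_of_hasDerivWithinAt_Iio_Ioi {f : ℝ → ℝ} {t a b : ℝ}
    (hl : HasDerivWithinAt f b (Iio t) t) (hr : HasDerivWithinAt f a (Ioi t) t)
    (hb : b < 0) (ha : 0 < a) : ∀ᶠ s in 𝓝[≠] t, f t < f s := by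
  rw [← nhdsLT_sup_nhdsGT, eventually_sup]
  constructor
  · filter_upwards [((hasDerivWithinAt_iff_tendsto_slope' self_notMem_Iio).1 hl).eventually
      (eventually_lt_nhds hb), self_mem_nhdsWithin] with s hslope (hs : s < t)
    rw [slope_def_field, div_neg_iff] at hslope
    rcases hslope with h | h <;> linarith [h.1, h.2]
  · filter_upwards [((hasDerivWithinAt_iff_tendsto_slope' self_notMem_Ioi).1 hr).eventually
      (eventually_gt_nhds ha), self_mem_nhdsWithin] with s hslope (hs : t < s)
    rw [slope_def_field, div_pos_iff] at hslope
    rcases hslope with h | h <;> linarith [h.1, h.2]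

section OneSidedDerivatives

variable {f g g' : ℝ → ℝ}

lemma countable_setOf_hasDerivWithinAt_Iio_lt_Ioi {S : Set ℝ}
    (hl : ∀ t ∈ S, HasDerivWithinAt f (g' t) (Iio t) t)
    (hr : ∀ t ∈ S, HasDerivWithinAt f (g t) (Ioi t) t) :
    {t ∈ S | g' t < g t}.Countable := by
  refine .mono ?_ (countable_iUnion fun p : ℚ =>
    countable_setOf_strictLocalMin fun s => f s - p * s)
  rintro t ⟨ht, hlt⟩
  obtain ⟨p, hp', hp⟩ := exists_rat_btwn hlt
  have hlin := (hasDerivAt_id t).const_mul (p : ℝ)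
  refine mem_iUnion.2 ⟨p, eventually_lt_of_hasDerivWithinAt_Iio_Ioi
    ((hl t ht).sub hlin.hasDerivWithinAt) ((hr t ht).sub hlin.hasDerivWithinAt) ?_ ?_⟩ <;>
  simp only [mul_one] <;> linarith

lemma countable_setOf_hasDerivWithinAt_Iio_ne_Ioi {S : Set ℝ}
    (hl : ∀ t ∈ S, HasDerivWithinAt f (g' t) (Iio t) t)
    (hr : ∀ t ∈ S, HasDerivWithinAt f (g t) (Ioi t) t) :
    {t ∈ S | g' t ≠ g t}.Countable := by
  have hlt := countable_setOf_hasDerivWithinAt_Iio_lt_Ioi hl hr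
  have hgt := countable_setOf_hasDerivWithinAt_Iio_lt_Ioi (f := -f) (g := -g) (g' := -g')
    (fun t ht => (hl t ht).neg) (fun t ht => (hr t ht).neg)
  refine (hlt.union hgt).mono fun t ⟨ht, hne⟩ => ?_
  rcases hne.lt_or_gt with h | h
  · exact .inl ⟨ht, h⟩
  · exact .inr ⟨ht, neg_lt_neg h⟩

lemma continuousOn_Icc_of_hasDerivWithinAt_Iio_Ioi {a b : ℝ}
    (hl : ∀ t ∈ Ioc a b, HasDerivWithinAt f (g' t) (Iio t) t)
    (hr : ∀ t ∈ Ico a b, HasDerivWithinAt f (g t) (Ioi t) t) :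
    ContinuousOn f (Icc a b) := by
  intro t ht
  have hleft : ContinuousWithinAt f (Icc a t) t := by
    rcases ht.1.eq_or_lt with rfl | hat
    · simp [continuousWithinAt_singleton]
    · exact (hl t ⟨hat, ht.2⟩).Iic_of_Iio.continuousWithinAt.mono Icc_subset_Iic_self
  have hright : ContinuousWithinAt f (Icc t b) t := by
    rcases ht.2.eq_or_lt with rfl | htb
    · simp [continuousWithinAt_singleton]
    · exact (hr t ⟨ht.1, htb⟩).Ici_of_Ioi.continuousWithinAt.mono Icc_subset_Ici_self
  rw [← Icc_union_Icc_eq_Icc ht.1 ht.2]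
  exact hleft.union hright

theorem integral_eq_sub_of_hasDerivWithinAt_Iio_Ioi {φ : ℝ → ℝ} {a b : ℝ} (hab : a ≤ b)
    (hf : ContinuousOn f (Icc a b))
    (hl : ∀ t ∈ Ioo a b, HasDerivWithinAt f (g' t) (Iio t) t)
    (hr : ∀ t ∈ Ioo a b, HasDerivWithinAt f (g t) (Ioi t) t)
    (hφ : IntegrableOn φ (Ioc a b)) (hgφ : ∀ t ∈ Ioo a b, g' t = g t → g t = φ t) :
    ∫ t in a..b, φ t = f b - f a := by
  have hae : ∀ᵐ t, t ∈ Ioc a b → g t = φ t := by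
    have hnull := (countable_setOf_hasDerivWithinAt_Iio_ne_Ioi hl hr).union (countable_singleton b)
    filter_upwards [hnull.ae_notMem volume] with t hnot ht
    have htb : t ≠ b := fun h => hnot (.inr h)
    have htIoo : t ∈ Ioo a b := ⟨ht.1, ht.2.lt_of_ne htb⟩
    exact hgφ t htIoo (by_contra fun hne => hnot (.inl ⟨htIoo, hne⟩))
  have hg : IntegrableOn g (Ioc a b) :=
    hφ.congr_fun_ae ((ae_restrict_iff' measurableSet_Ioc).2 (hae.mono fun t h ht => (h ht).symm))
  rw [← intervalIntegral.integral_eq_sub_of_hasDeriv_right_of_le hab hf hr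
    ((intervalIntegrable_iff_integrableOn_Ioc_of_le hab).2 hg)]
  refine intervalIntegral.integral_congr_ae ?_
  rw [uIoc_of_le hab]
  exact hae.mono fun t h ht => (h ht).symm

end OneSidedDerivatives

section SegmentMeasure

variable {α : Type*} [MeasurableSpace α] (μ₀ μ₁ : Measure α)

def segmentMeasure (t : ℝ) : Measure α :=
  ENNReal.ofReal (1 - t) • μ₀ + ENNReal.ofReal t • μ₁

@[simp] lemma segmentMeasure_zero : segmentMeasure μ₀ μ₁ 0 = μ₀ := by
  simp [segmentMeasure]

@[simp] lemma segmentMeasure_one : segmentMeasure μ₀ μ₁ 1 = μ₁ := by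
  simp [segmentMeasure]

lemma segmentMeasure_segmentMeasure {t u ε : ℝ} (ht : t ∈ Icc (0 : ℝ) 1)
    (hu : u ∈ Icc (0 : ℝ) 1) (hε : ε ∈ Icc (0 : ℝ) 1) :
    segmentMeasure (segmentMeasure μ₀ μ₁ t) (segmentMeasure μ₀ μ₁ u) ε =
      segmentMeasure μ₀ μ₁ (t + ε * (u - t)) := by
  obtain ⟨ht₀, ht₁⟩ := ht
  obtain ⟨hu₀, hu₁⟩ := hu
  obtain ⟨hε₀, hε₁⟩ := hε
  have hcoef : ∀ a b : ℝ, 0 ≤ a → 0 ≤ b →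
      ENNReal.ofReal (1 - ε) * ENNReal.ofReal a + ENNReal.ofReal ε * ENNReal.ofReal b =
        ENNReal.ofReal ((1 - ε) * a + ε * b) := fun a b ha hb => by
    rw [← ENNReal.ofReal_mul (by linarith), ← ENNReal.ofReal_mul hε₀,
      ← ENNReal.ofReal_add (mul_nonneg (by linarith) ha) (mul_nonneg hε₀ hb)]
  calc segmentMeasure (segmentMeasure μ₀ μ₁ t) (segmentMeasure μ₀ μ₁ u) ε
      = (ENNReal.ofReal (1 - ε) * ENNReal.ofReal (1 - t) +
            ENNReal.ofReal ε * ENNReal.ofReal (1 - u)) • μ₀ +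
        (ENNReal.ofReal (1 - ε) * ENNReal.ofReal t + ENNReal.ofReal ε * ENNReal.ofReal u) • μ₁ := by
        simp only [segmentMeasure, smul_add, smul_smul, add_smul]
        abel
    _ = segmentMeasure μ₀ μ₁ (t + ε * (u - t)) := by
        rw [hcoef _ _ (by linarith) (by linarith), hcoef _ _ ht₀ hu₀, segmentMeasure]
        congr 3 <;> ring

end SegmentMeasure

lemma isP2_segmentMeasure {d : ℕ} {μ₀ μ₁ : Measure (EuclideanSpace ℝ (Fin d))}
    (hμ₀ : IsP2 μ₀) (hμ₁ : IsP2 μ₁) {t : ℝ} (ht : t ∈ Icc (0 : ℝ) 1) :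
    IsP2 (segmentMeasure μ₀ μ₁ t) := by
  refine ⟨⟨?_⟩, (hμ₀.2.smul_measure ENNReal.ofReal_ne_top).add_measure
    (hμ₁.2.smul_measure ENNReal.ofReal_ne_top)⟩
  have := hμ₀.1
  have := hμ₁.1
  simp only [segmentMeasure, Measure.add_apply, Measure.smul_apply, smul_eq_mul, measure_univ,
    mul_one]
  rw [← ENNReal.ofReal_add (by linarith [ht.2]) ht.1]
  norm_num

lemma hasDerivWithinAt_of_tendsto_lineMap {f : ℝ → ℝ} {t u L : ℝ} {s : Set ℝ} (htu : t ≠ u)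
    (hs : MapsTo (fun x => (x - t) / (u - t)) s (Ioi 0))
    (hf : Tendsto (fun ε => (f (t + ε * (u - t)) - f t) / ε) (𝓝[>] 0) (𝓝 L)) :
    HasDerivWithinAt f ((u - t)⁻¹ * L) s t := by
  have hut : u - t ≠ 0 := sub_ne_zero.2 htu.symm
  have hline : HasDerivWithinAt (fun ε => f (t + ε * (u - t))) L (Ioi 0) 0 :=
    (hasDerivWithinAt_iff_tendsto_slope' self_notMem_Ioi).2
      (hf.congr fun ε => by simp [slope_def_field])
  have hrescale : HasDerivWithinAt (fun x => (x - t) / (u - t)) (u - t)⁻¹ s t := by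
    simpa using (((hasDerivAt_id t).sub_const t).div_const (u - t)).hasDerivWithinAt
  have hcomp : (fun ε => f (t + ε * (u - t))) ∘ (fun x => (x - t) / (u - t)) = f := by
    funext x
    simp only [Function.comp, div_mul_cancel₀ _ hut, add_sub_cancel]
  simpa only [hcomp, smul_eq_mul] using hline.scomp_of_eq t hrescale hs (by simp)

def IsFirstVariation {d : ℕ} (G : Measure (EuclideanSpace ℝ (Fin d)) → ℝ)
    (V : Measure (EuclideanSpace ℝ (Fin d)) → EuclideanSpace ℝ (Fin d) → ℝ) : Prop :=
  ∀ μ, IsP2 μ → ∀ ν, IsP2 ν →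
    Tendsto (fun ε : ℝ => (G (segmentMeasure μ ν ε) - G μ) / ε) (𝓝[>] 0)
      (𝓝 ((∫ x, V μ x ∂ν) - ∫ x, V μ x ∂μ))

section FirstVariation

variable {d : ℕ} {G : Measure (EuclideanSpace ℝ (Fin d)) → ℝ}
  {V : Measure (EuclideanSpace ℝ (Fin d)) → EuclideanSpace ℝ (Fin d) → ℝ}
  {μ₀ μ₁ : Measure (EuclideanSpace ℝ (Fin d))}

local notation "μ_[" t "]" => segmentMeasure μ₀ μ₁ t

lemma IsFirstVariation.hasDerivWithinAt_segmentMeasure (hGV : IsFirstVariation G V)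
    (hμ₀ : IsP2 μ₀) (hμ₁ : IsP2 μ₁) {t u : ℝ} (ht : t ∈ Icc (0 : ℝ) 1) (hu : u ∈ Icc (0 : ℝ) 1)
    (htu : t ≠ u) {s : Set ℝ} (hs : MapsTo (fun x => (x - t) / (u - t)) s (Ioi 0)) :
    HasDerivWithinAt (fun x => G μ_[x])
      ((u - t)⁻¹ * ((∫ x, V μ_[t] x ∂μ_[u]) - ∫ x, V μ_[t] x ∂μ_[t])) s t := by
  refine hasDerivWithinAt_of_tendsto_lineMap htu hs ((hGV _ (isP2_segmentMeasure hμ₀ hμ₁ ht) _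
    (isP2_segmentMeasure hμ₀ hμ₁ hu)).congr' ?_)
  filter_upwards [Ioo_mem_nhdsGT one_pos] with ε hε
  rw [segmentMeasure_segmentMeasure μ₀ μ₁ ht hu ⟨hε.1.le, hε.2.le⟩]

lemma IsFirstVariation.hasDerivWithinAt_Ioi_segmentMeasure (hGV : IsFirstVariation G V)
    (hμ₀ : IsP2 μ₀) (hμ₁ : IsP2 μ₁) {t : ℝ} (ht : t ∈ Ico (0 : ℝ) 1) :
    HasDerivWithinAt (fun x => G μ_[x])
      ((1 - t)⁻¹ * ((∫ x, V μ_[t] x ∂μ₁) - ∫ x, V μ_[t] x ∂μ_[t])) (Ioi t) t := by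
  simpa only [segmentMeasure_one] using hGV.hasDerivWithinAt_segmentMeasure hμ₀ hμ₁
    (Ico_subset_Icc_self ht) (right_mem_Icc.2 zero_le_one) ht.2.ne (s := Ioi t)
    fun x hx => div_pos (sub_pos.2 hx) (sub_pos.2 ht.2)

lemma IsFirstVariation.hasDerivWithinAt_Iio_segmentMeasure (hGV : IsFirstVariation G V)
    (hμ₀ : IsP2 μ₀) (hμ₁ : IsP2 μ₁) {t : ℝ} (ht : t ∈ Ioc (0 : ℝ) 1) :
    HasDerivWithinAt (fun x => G μ_[x])
      ((0 - t)⁻¹ * ((∫ x, V μ_[t] x ∂μ₀) - ∫ x, V μ_[t] x ∂μ_[t])) (Iio t) t := by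
  simpa only [segmentMeasure_zero] using hGV.hasDerivWithinAt_segmentMeasure hμ₀ hμ₁
    (Ioc_subset_Icc_self ht) (left_mem_Icc.2 zero_le_one) ht.1.ne' (s := Iio t)
    fun x hx => div_pos_of_neg_of_neg (sub_neg.2 hx) (sub_neg.2 ht.1)

end FirstVariation

theorem stmt_12_general {d : ℕ}
    (G : Measure (EuclideanSpace ℝ (Fin d)) → ℝ)
    (V : Measure (EuclideanSpace ℝ (Fin d)) → EuclideanSpace ℝ (Fin d) → ℝ)
    -- first-variation property at every μ ∈ P₂
    (hfirstvar : ∀ μ, IsP2 μ → ∀ ν, IsP2 ν →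
      Tendsto (fun ε : ℝ =>
          (G (ENNReal.ofReal (1 - ε) • μ + ENNReal.ofReal ε • ν) - G μ) / ε)
        (nhdsWithin 0 (Ioi 0))
        (nhds ((∫ x, V μ x ∂ν) - ∫ x, V μ x ∂μ)))
    (μ₀ μ₁ : Measure (EuclideanSpace ℝ (Fin d))) (hμ₀ : IsP2 μ₀) (hμ₁ : IsP2 μ₁)
    -- continuity in t of the first-variation integral along the segment
    (hcont : ContinuousOn (fun t : ℝ =>
        (∫ x, V (ENNReal.ofReal (1 - t) • μ₀ + ENNReal.ofReal t • μ₁) x ∂μ₁) -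
        ∫ x, V (ENNReal.ofReal (1 - t) • μ₀ + ENNReal.ofReal t • μ₁) x ∂μ₀)
      (Icc 0 1)) :
    G μ₁ - G μ₀ = ∫ t in Icc (0 : ℝ) 1,
      ((∫ x, V (ENNReal.ofReal (1 - t) • μ₀ + ENNReal.ofReal t • μ₁) x ∂μ₁) -
        ∫ x, V (ENNReal.ofReal (1 - t) • μ₀ + ENNReal.ofReal t • μ₁) x ∂μ₀) := by
  change IsFirstVariation G V at hfirstvar
  change ContinuousOn (fun t : ℝ => (∫ x, V (segmentMeasure μ₀ μ₁ t) x ∂μ₁) -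
    ∫ x, V (segmentMeasure μ₀ μ₁ t) x ∂μ₀) (Icc 0 1) at hcont
  show G μ₁ - G μ₀ = ∫ t in Icc (0 : ℝ) 1,
    ((∫ x, V (segmentMeasure μ₀ μ₁ t) x ∂μ₁) - ∫ x, V (segmentMeasure μ₀ μ₁ t) x ∂μ₀)
  have hr := fun t (ht : t ∈ Ico (0 : ℝ) 1) =>
    hfirstvar.hasDerivWithinAt_Ioi_segmentMeasure hμ₀ hμ₁ ht
  have hl := fun t (ht : t ∈ Ioc (0 : ℝ) 1) =>
    hfirstvar.hasDerivWithinAt_Iio_segmentMeasure hμ₀ hμ₁ ht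
  -- Adding the two equations eliminates the possibly junk `∫ V[μ_t] dμ_t`.
  have hagree : ∀ t ∈ Ioo (0 : ℝ) 1, ∀ a₀ a₁ c : ℝ,
      (0 - t)⁻¹ * (a₀ - c) = (1 - t)⁻¹ * (a₁ - c) → (1 - t)⁻¹ * (a₁ - c) = a₁ - a₀ := by
    intro t ht a₀ a₁ c h
    have h₀ : t ≠ 0 := ht.1.ne'
    have h₁ : 1 - t ≠ 0 := (sub_pos.2 ht.2).ne'
    field_simp at h ⊢
    linear_combination h
  rw [integral_Icc_eq_integral_Ioc, ← intervalIntegral.integral_of_le zero_le_one,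
    integral_eq_sub_of_hasDerivWithinAt_Iio_Ioi zero_le_one
      (continuousOn_Icc_of_hasDerivWithinAt_Iio_Ioi hl hr)
      (fun t ht => hl t (Ioo_subset_Ioc_self ht)) (fun t ht => hr t (Ioo_subset_Ico_self ht))
      (hcont.integrableOn_Icc.mono_set Ioc_subset_Icc_self) fun t ht => hagree t ht _ _ _]
  simp

/-- Integral formula: `G(μ₁) - G(μ₀) = ∫₀¹ ∫ V[μ_t] d(μ₁ - μ₀) dt` along the line
segment `μ_t = (1-t)μ₀ + tμ₁`. -/
theorem stmt_12 {d : ℕ}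
    (G : Measure (EuclideanSpace ℝ (Fin d)) → ℝ)
    (V : Measure (EuclideanSpace ℝ (Fin d)) → EuclideanSpace ℝ (Fin d) → ℝ)
    (hVcont : ∀ μ, IsP2 μ → Continuous (V μ))
    -- first-variation property at every μ ∈ P₂
    (hfirstvar : ∀ μ, IsP2 μ → ∀ ν, IsP2 ν →
      Tendsto (fun ε : ℝ =>
          (G (ENNReal.ofReal (1 - ε) • μ + ENNReal.ofReal ε • ν) - G μ) / ε)
        (nhdsWithin 0 (Ioi 0))
        (nhds ((∫ x, V μ x ∂ν) - ∫ x, V μ x ∂μ)))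
    (μ₀ μ₁ : Measure (EuclideanSpace ℝ (Fin d))) (hμ₀ : IsP2 μ₀) (hμ₁ : IsP2 μ₁)
    -- continuity in t of the first-variation integral along the segment
    (hcont : ContinuousOn (fun t : ℝ =>
        (∫ x, V (ENNReal.ofReal (1 - t) • μ₀ + ENNReal.ofReal t • μ₁) x ∂μ₁) -
        ∫ x, V (ENNReal.ofReal (1 - t) • μ₀ + ENNReal.ofReal t • μ₁) x ∂μ₀)
      (Icc 0 1)) :
    G μ₁ - G μ₀ = ∫ t in Icc (0 : ℝ) 1,
      ((∫ x, V (ENNReal.ofReal (1 - t) • μ₀ + ENNReal.ofReal t • μ₁) x ∂μ₁) -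
        ∫ x, V (ENNReal.ofReal (1 - t) • μ₀ + ENNReal.ofReal t • μ₁) x ∂μ₀) :=
  stmt_12_general G V hfirstvar μ₀ μ₁ hμ₀ hμ₁ hcont
end
end
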